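/- For every m ≥ 1, the Roberts graph R_m on 2m vertices satisfies box(R_m) = m. -/

import Mathlib

/-- A `k`-box representation of `G`: assignments of axis-parallel boxes
(given by lower and upper corners) to vertices so that distinct vertices are
adjacent iff all their coordinate intervals intersect. -/
def HasBoxRep {V : Type*} (G : SimpleGraph V) (k : ℕ) : Prop :=
  ∃ a b : V → Fin k → ℝ,
    (∀ v i, a v i ≤ b v i) ∧
    ∀ u v : V, u ≠ v →
      (G.Adj u v ↔ ∀ i : Fin k, (Set.Icc (a u i) (b u i) ∩ Set.Icc (a v i) (b v i)).Nonempty)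

/-- The boxicity of `G`: the least `k` such that `G` has a `k`-box representation. -/
noncomputable def boxicity {V : Type*} (G : SimpleGraph V) : ℕ :=
  sInf {k : ℕ | HasBoxRep G k}

/-- The Roberts graph (cocktail party graph) on `2m` vertices: vertices `(i, s)`
with `i : Fin m`, `s : Fin 2`; two distinct vertices `(i, s)` and `(j, t)` are
adjacent iff `i ≠ j`. -/
def robertsGraph (m : ℕ) : SimpleGraph (Fin m × Fin 2) :=
  SimpleGraph.fromRel (fun p q => p.1 ≠ q.1)

/-!
Give the vertex `(i, s)` the box that is the point `s` in coordinate `i` and `[0, 1]` in every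
other coordinate: two such boxes meet in every coordinate unless they come from the same `i` with
different `s`. So `m` coordinates suffice.

Conversely, in a box representation each non-adjacent pair `(i, 0), (i, 1)` needs a coordinate in
which its two intervals are disjoint, and two pairs all of whose cross pairs are adjacent cannot
share it: if `I₀` lies left of `I₁` and `J₀` left of `J₁`, then `I₀ ∩ J₁ ≠ ∅` and `I₁ ∩ J₀ ≠ ∅`
give `left J₁ ≤ right I₀ < left I₁ ≤ right J₀ < left J₁`. So the `m` pairs need `m` coordinates.
-/

open Set

lemma Set.Icc_inter_Icc_nonempty_iff {α : Type*} [LinearOrder α] {a₁ b₁ a₂ b₂ : α} :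
    (Icc a₁ b₁ ∩ Icc a₂ b₂).Nonempty ↔ a₁ ≤ b₁ ∧ a₁ ≤ b₂ ∧ a₂ ≤ b₁ ∧ a₂ ≤ b₂ := by
  simp only [Icc_inter_Icc, nonempty_Icc, sup_le_iff, le_inf_iff]
  tauto

lemma Set.exists_Icc_inter_Icc_not_nonempty {α : Type*} [LinearOrder α] {a b c d : Fin 2 → α}
    (hI : ¬ (Icc (a 0) (b 0) ∩ Icc (a 1) (b 1)).Nonempty)
    (hJ : ¬ (Icc (c 0) (d 0) ∩ Icc (c 1) (d 1)).Nonempty) :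
    ∃ s t, ¬ (Icc (a s) (b s) ∩ Icc (c t) (d t)).Nonempty := by
  by_contra! h
  simp only [Icc_inter_Icc_nonempty_iff] at h hI hJ
  obtain ⟨_, _, _, _⟩ := h 0 0
  obtain ⟨_, _, _, _⟩ := h 0 1
  obtain ⟨_, _, _, _⟩ := h 1 0
  obtain ⟨_, _, _, _⟩ := h 1 1
  simp only [not_and_or, not_le] at hI hJ
  rcases hI with hI | hI | hI | hI <;> rcases hJ with hJ | hJ | hJ | hJ <;> order

lemma HasBoxRep.card_le_of_nonadj_pairs {V ι : Type*} [Fintype ι] {G : SimpleGraph V} {k : ℕ}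
    (hG : HasBoxRep G k) (p : ι → Fin 2 → V) (hne : ∀ i, p i 0 ≠ p i 1)
    (hnadj : ∀ i, ¬ G.Adj (p i 0) (p i 1))
    (hadj : ∀ i j, i ≠ j → ∀ s t, G.Adj (p i s) (p j t)) :
    Fintype.card ι ≤ k := by
  obtain ⟨a, b, -, hrep⟩ := hG
  have hsep : ∀ i, ∃ j, ¬ (Icc (a (p i 0) j) (b (p i 0) j) ∩
      Icc (a (p i 1) j) (b (p i 1) j)).Nonempty := by
    intro i
    simpa [hrep _ _ (hne i)] using hnadj i
  choose coord hcoord using hsep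
  suffices Function.Injective coord by simpa using Fintype.card_le_of_injective coord this
  intro i j hij
  by_contra hne_ij
  obtain ⟨s, t, hst⟩ := exists_Icc_inter_Icc_not_nonempty
    (a := fun s => a (p i s) (coord i)) (b := fun s => b (p i s) (coord i))
    (c := fun t => a (p j t) (coord i)) (d := fun t => b (p j t) (coord i))
    (hcoord i) (hij ▸ hcoord j)
  have hpne : p i s ≠ p j t := (hadj i j hne_ij s t).ne
  exact hst ((hrep _ _ hpne).mp (hadj i j hne_ij s t) (coord i))

lemma robertsGraph_adj {m : ℕ} {u v : Fin m × Fin 2} :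
    (robertsGraph m).Adj u v ↔ u ≠ v ∧ u.1 ≠ v.1 := by
  simp only [robertsGraph, SimpleGraph.fromRel_adj]
  tauto

def robertsCorner {m : ℕ} (e : ℝ) (v : Fin m × Fin 2) (j : Fin m) : ℝ :=
  if j = v.1 then v.2 else e

lemma robertsBox_inter_nonempty_iff {m : ℕ} (u v : Fin m × Fin 2) (j : Fin m) :
    (Icc (robertsCorner 0 u j) (robertsCorner 1 u j) ∩
      Icc (robertsCorner 0 v j) (robertsCorner 1 v j)).Nonempty ↔
      (j = u.1 → j = v.1 → u.2 = v.2) := by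
  have hmem : ∀ s : Fin 2, (s : ℝ) ∈ Icc (0 : ℝ) 1 := fun s => by
    fin_cases s <;> norm_num
  simp only [robertsCorner]
  split_ifs with hu hv hv
  · simp only [Icc_self, singleton_inter_nonempty, mem_singleton_iff, Nat.cast_inj, Fin.val_inj]
    exact ⟨fun h _ _ => h, fun h => h hu hv⟩
  · simp [hv, hmem]
  · simp [hu, hmem]
  · simp [hu]

lemma hasBoxRep_robertsGraph (m : ℕ) : HasBoxRep (robertsGraph m) m := by
  refine ⟨robertsCorner 0, robertsCorner 1, fun v j => ?_, fun u v huv => ?_⟩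
  · simp only [robertsCorner]
    split_ifs <;> norm_num
  · simp only [robertsGraph_adj, robertsBox_inter_nonempty_iff]
    rw [forall_eq]
    simp only [Ne, Prod.ext_iff] at huv ⊢
    tauto

theorem boxicity_robertsGraph_general (m : ℕ) :
    boxicity (robertsGraph m) = m := by
  have hrep := hasBoxRep_robertsGraph m
  refine le_antisymm (Nat.sInf_le hrep) (le_csInf ⟨m, hrep⟩ fun k hk => ?_)
  simpa using hk.card_le_of_nonadj_pairs (fun i s => (i, s)) (by simp) (by simp [robertsGraph_adj])
    (fun i j hij s t => by simp [robertsGraph_adj, hij])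

/-- The Roberts graph on `2m` vertices has boxicity exactly `m`. -/
theorem boxicity_robertsGraph (m : ℕ) (hm : 1 ≤ m) :
    boxicity (robertsGraph m) = m :=
  boxicity_robertsGraph_general m
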